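/- arXiv:2506.04707 — 2 statements merged into one kernel-verified Lean document; each statement's English description precedes it below -/
import Mathlib

section
/- Let (M, q) be an m-dimensional complex vector space with a non-degenerate symmetric bilinear form, and let θ : M → M be skew-symmetric with respect to q. If θ is not nilpotent and has rank two, then M decomposes as the direct sum ker(θ) ⊕ im(θ), and this decomposition is orthogonal with respect to q. -/
/-- Let `(M, q)` be an `m`-dimensional complex vector space with a
non-degenerate symmetric bilinear form, and let `θ : M → M` be skew-symmetric with respect
to `q`. If `θ` is not nilpotent and has rank two, then `M = ker θ ⊕ im θ`, and this
decomposition is orthogonal with respect to `q`. -/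
theorem kernel_image_orthogonal_decomposition
    {M : Type*} [AddCommGroup M] [Module ℂ M] [FiniteDimensional ℂ M]
    (q : M →ₗ[ℂ] M →ₗ[ℂ] ℂ)
    (hsymm : ∀ v w : M, q v w = q w v)
    (hnd : ∀ v : M, (∀ w : M, q v w = 0) → v = 0)
    (θ : M →ₗ[ℂ] M)
    (hskew : ∀ v₁ v₂ : M, q (θ v₁) v₂ = - q v₁ (θ v₂))
    (hnil : ¬ IsNilpotent θ)
    (hrk : Module.finrank ℂ (LinearMap.range θ) = 2) :
    IsCompl (LinearMap.ker θ) (LinearMap.range θ) ∧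
      ∀ v ∈ LinearMap.ker θ, ∀ w ∈ LinearMap.range θ, q v w = 0 := by
  -- Orthogonality
  have horth : ∀ v ∈ LinearMap.ker θ, ∀ w ∈ LinearMap.range θ, q v w = 0 := by
    rintro v hv w ⟨u, rfl⟩
    have h1 := hskew v u
    rw [LinearMap.mem_ker.mp hv] at h1
    simp only [map_zero, LinearMap.zero_apply] at h1
    exact neg_eq_zero.mp h1.symm
  -- Disjointness
  have hdisj : Disjoint (LinearMap.ker θ) (LinearMap.range θ) := by
    rw [Submodule.disjoint_def]
    by_contra hcon
    push_neg at hcon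
    obtain ⟨x, hxk, hxr, hx0⟩ := hcon
    -- restriction of θ to its range
    set φ : LinearMap.range θ →ₗ[ℂ] M := θ ∘ₗ (LinearMap.range θ).subtype with hφdef
    set S : Submodule ℂ M := LinearMap.range φ with hSdef
    have hxker : (⟨x, hxr⟩ : LinearMap.range θ) ∈ LinearMap.ker φ := by
      simp [hφdef, LinearMap.mem_ker.mp hxk]
    have hkerpos : 0 < Module.finrank ℂ (LinearMap.ker φ) := by
      rw [Module.finrank_pos_iff]
      exact ⟨⟨⟨⟨x, hxr⟩, hxker⟩, 0, by
        intro h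
        apply hx0
        have := congrArg (fun z => (z : LinearMap.ker φ).1.1) h
        simpa using this⟩⟩
    have hrn := LinearMap.finrank_range_add_finrank_ker φ
    rw [hrk] at hrn
    have hS1 : Module.finrank ℂ S ≤ 1 := by rw [hSdef]; omega
    -- every θ (θ v) lies in S
    have hmemS : ∀ v : M, θ (θ v) ∈ S := fun v =>
      ⟨⟨θ v, LinearMap.mem_range_self θ v⟩, rfl⟩
    -- S is θ-invariant
    have hinv : ∀ s ∈ S, θ s ∈ S := by
      rintro s ⟨⟨u, hu⟩, rfl⟩
      exact ⟨⟨θ u, LinearMap.mem_range_self θ u⟩, rfl⟩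
    rcases Nat.le_one_iff_eq_zero_or_eq_one.mp hS1 with h0 | h1
    · -- S = ⊥, so θ² = 0
      apply hnil
      refine ⟨2, ?_⟩
      ext v
      have hv := hmemS v
      rw [Submodule.finrank_eq_zero.mp h0] at hv
      simpa [pow_succ, Module.End.mul_apply] using hv
    · -- S is one-dimensional, spanned by w₀
      have hSne : S ≠ ⊥ := by
        intro h
        rw [h] at h1
        simp [finrank_bot] at h1
      obtain ⟨w₀, hw₀S, hw₀ne⟩ := Submodule.exists_mem_ne_zero_of_ne_bot hSne
      have hspan : Submodule.span ℂ {w₀} = S := by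
        apply Submodule.eq_of_le_of_finrank_le
        · rw [Submodule.span_le]; simpa using hw₀S
        · rw [h1, finrank_span_singleton hw₀ne]
      obtain ⟨lam, hlam⟩ := Submodule.mem_span_singleton.mp
        (hspan ▸ hinv w₀ hw₀S)
    -- θ w₀ = lam • w₀
      rcases eq_or_ne lam 0 with hl0 | hlne
      · -- θ³ = 0
        apply hnil
        refine ⟨3, ?_⟩
        ext v
        obtain ⟨c, hc⟩ := Submodule.mem_span_singleton.mp (hspan ▸ hmemS v)
        have : θ (θ (θ v)) = 0 := by
          rw [← hc, map_smul, ← hlam, hl0, zero_smul, smul_zero]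
        simpa [pow_succ, Module.End.mul_apply] using this
      · -- eigenvalue case: contradiction with nondegeneracy
        have hq0 : q w₀ w₀ = 0 := by
          have e1 := hskew w₀ w₀
          have e2 := hsymm (θ w₀) w₀
          have e3 : q w₀ (θ w₀) = 0 := CharZero.eq_neg_self_iff.mp (e2.symm.trans e1)
          rw [← hlam] at e3
          simp only [map_smul, smul_eq_mul] at e3
          exact (mul_eq_zero.mp e3).resolve_left hlne
        have hall : ∀ v : M, q w₀ v = 0 := by
          intro v
          have key : q w₀ (θ (θ v)) = lam ^ 2 * q w₀ v := by
            have a1 : ∀ u : M, q w₀ (θ u) = - q (θ w₀) u := fun u => by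
              rw [hskew w₀ u, neg_neg]
            rw [a1 (θ v), ← hlam]
            simp only [map_smul, LinearMap.smul_apply, smul_eq_mul]
            rw [a1 v, ← hlam]
            simp only [map_smul, LinearMap.smul_apply, smul_eq_mul]
            ring
          obtain ⟨c, hc⟩ := Submodule.mem_span_singleton.mp (hspan ▸ hmemS v)
          have key2 : q w₀ (θ (θ v)) = 0 := by
            rw [← hc, map_smul, smul_eq_mul, hq0, mul_zero]
          rw [key2] at key
          have := key.symm
          rcases mul_eq_zero.mp this with h | h
          · exact absurd (pow_eq_zero_iff (n := 2) (by norm_num) |>.mp h) hlne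
          · exact h
        exact hw₀ne (hnd w₀ hall)
  -- Codisjointness from dimension count
  have hsum := LinearMap.finrank_range_add_finrank_ker θ
  have hsupinf := Submodule.finrank_sup_add_finrank_inf_eq
    (LinearMap.ker θ) (LinearMap.range θ)
  rw [hdisj.eq_bot, finrank_bot] at hsupinf
  have htop : LinearMap.ker θ ⊔ LinearMap.range θ = ⊤ :=
    Submodule.eq_top_of_finrank_eq (by omega)
  exact ⟨isCompl_iff.mpr ⟨hdisj, codisjoint_iff.mpr htop⟩, horth⟩
end

section
/- Let M be a finite-dimensional complex vector space with non-degenerate symmetric bilinear form q, and θ : M → M skew-symmetric with respect to q, not nilpotent and of rank 2. Then the restriction of q to ker(θ) is non-degenerate. -/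
/-!
A non-nilpotent operator over `ℂ` has an eigenvalue `μ ≠ 0`, and skew-adjointness with respect to
a non-degenerate form makes `-μ` an eigenvalue too: a `μ`-eigenvector is orthogonal to the range
of `θ + μ`, so `θ + μ` is not surjective. The eigenspaces for `μ` and `-μ` lie in `range θ`, so
when `range θ` has dimension `2` they span it; being independent of the kernel `eigenspace 0`,
this gives `M = ker θ ⊕ range θ`. Skew-adjointness also makes `ker θ` orthogonal to `range θ`, so
a vector of `ker θ` orthogonal to `ker θ` is orthogonal to everything.
-/

open Module Module.End LinearMap

namespace Module.End

variable {K M : Type*} [Field K] [AddCommGroup M] [Module K M]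

open Polynomial in
theorem exists_hasEigenvalue_ne_zero_of_not_isNilpotent [IsAlgClosed K] [FiniteDimensional K M]
    {θ : End K M} (h : ¬ IsNilpotent θ) : ∃ μ ≠ 0, θ.HasEigenvalue μ := by
  contrapose! h
  have hroots : ∀ μ ∈ θ.charpoly.roots, X - C μ = X := fun μ hμ => by
    by_contra hne
    refine h μ (fun h0 => hne (by rw [h0, map_zero, sub_zero])) ?_
    exact (hasEigenvalue_iff_isRoot_charpoly θ μ).mpr (isRoot_of_mem_roots hμ)
  have hsplits : θ.charpoly.Splits := IsAlgClosed.splits _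
  rw [isNilpotent_iff_charpoly, ← θ.charpoly_natDegree, hsplits.natDegree_eq_card_roots]
  conv_lhs => rw [hsplits.eq_prod_roots_of_monic θ.charpoly_monic]
  rw [Multiset.map_congr rfl hroots, Multiset.map_const', Multiset.prod_replicate]

theorem eigenspace_le_range {θ : End K M} {μ : K} (hμ : μ ≠ 0) : θ.eigenspace μ ≤ range θ :=
  fun v hv => ⟨μ⁻¹ • v, by rw [map_smul, mem_eigenspace_iff.mp hv, inv_smul_smul₀ hμ]⟩

theorem disjoint_ker_eigenspace_sup_eigenspace {θ : End K M} {μ ν : K} (hμ : μ ≠ 0) (hν : ν ≠ 0) :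
    Disjoint (ker θ) (θ.eigenspace μ ⊔ θ.eigenspace ν) := by
  have := θ.eigenspaces_iSupIndep.disjoint_biSup (x := 0) (y := {μ, ν}) (by simp [hμ.symm, hν.symm])
  rwa [iSup_pair, eigenspace_zero] at this

theorem two_le_finrank_eigenspace_sup_eigenspace [FiniteDimensional K M] {θ : End K M} {μ ν : K}
    (hμν : μ ≠ ν) (hμ : θ.HasEigenvalue μ) (hν : θ.HasEigenvalue ν) :
    2 ≤ finrank K ↥(θ.eigenspace μ ⊔ θ.eigenspace ν) := by
  have hdisj := θ.eigenspaces_iSupIndep.pairwiseDisjoint hμν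
  have := Submodule.finrank_sup_add_finrank_inf_eq (θ.eigenspace μ) (θ.eigenspace ν)
  rw [hdisj.eq_bot, finrank_bot, add_zero] at this
  have h1 := Submodule.one_le_finrank_iff.mpr (hasEigenvalue_iff.mp hμ)
  have h2 := Submodule.one_le_finrank_iff.mpr (hasEigenvalue_iff.mp hν)
  omega

theorem isCompl_ker_range_of_finrank_range_le_two [FiniteDimensional K M] {θ : End K M} {μ ν : K}
    (hμ₀ : μ ≠ 0) (hν₀ : ν ≠ 0) (hμν : μ ≠ ν) (hμ : θ.HasEigenvalue μ) (hν : θ.HasEigenvalue ν)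
    (hrk : finrank K (range θ) ≤ 2) : IsCompl (ker θ) (range θ) := by
  have hrange : θ.eigenspace μ ⊔ θ.eigenspace ν = range θ :=
    Submodule.eq_of_le_of_finrank_le (sup_le (eigenspace_le_range hμ₀) (eigenspace_le_range hν₀))
      (hrk.trans (two_le_finrank_eigenspace_sup_eigenspace hμν hμ hν))
  refine (Submodule.isCompl_iff_disjoint _ _ ?_).mpr ?_
  · rw [add_comm, finrank_range_add_finrank_ker]
  · rw [← hrange]
    exact disjoint_ker_eigenspace_sup_eigenspace hμ₀ hν₀

end Module.End

namespace LinearMap.IsSkewAdjoint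

variable {K M : Type*} [Field K] [AddCommGroup M] [Module K M] {q : M →ₗ[K] M →ₗ[K] K}
  {θ : End K M}

theorem apply_eq_zero_of_mem_ker (hθ : q.IsSkewAdjoint θ) {v : M} (hv : v ∈ ker θ) (u : M) :
    q v (θ u) = 0 := by
  simpa [mem_ker.mp hv] using (hθ v u).symm

theorem hasEigenvalue_neg [FiniteDimensional K M] (hq : q.SeparatingLeft) (hθ : q.IsSkewAdjoint θ)
    {μ : K} (hμ : θ.HasEigenvalue μ) : θ.HasEigenvalue (-μ) := by
  obtain ⟨e, he⟩ := hμ.exists_hasEigenvector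
  rw [hasEigenvalue_iff, eigenspace_def]
  intro hker
  have hsurj := injective_iff_surjective.mp (ker_eq_bot.mp hker)
  refine he.2 (hq e fun w => ?_)
  obtain ⟨u, rfl⟩ := hsurj w
  have hθe : -q e (θ u) = μ * q e u := by
    simpa [he.apply_eq_smul] using (hθ e u).symm
  simp [← hθe]

theorem separatingLeft_ker (hq : q.SeparatingLeft) (hθ : q.IsSkewAdjoint θ)
    (h : Codisjoint (ker θ) (range θ)) :
    ∀ v ∈ ker θ, (∀ w ∈ ker θ, q v w = 0) → v = 0 := by
  intro v hv hvker
  refine hq v fun w => ?_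
  obtain ⟨k, hk, _, ⟨u, rfl⟩, rfl⟩ := Submodule.mem_sup.mp (h.eq_top ▸ Submodule.mem_top : w ∈ _)
  rw [map_add, hvker k hk, hθ.apply_eq_zero_of_mem_ker hv, add_zero]

end LinearMap.IsSkewAdjoint

theorem restriction_to_kernel_nondegenerate_general
    {M : Type*} [AddCommGroup M] [Module ℂ M] [FiniteDimensional ℂ M]
    (q : M →ₗ[ℂ] M →ₗ[ℂ] ℂ)
    (hnd : ∀ v : M, (∀ w : M, q v w = 0) → v = 0)
    (θ : M →ₗ[ℂ] M)
    (hskew : ∀ v₁ v₂ : M, q (θ v₁) v₂ = - q v₁ (θ v₂))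
    (hnil : ¬ IsNilpotent θ)
    (hrk : Module.finrank ℂ (LinearMap.range θ) = 2) :
    ∀ v ∈ LinearMap.ker θ, (∀ w ∈ LinearMap.ker θ, q v w = 0) → v = 0 := by
  have hθ : q.IsSkewAdjoint θ := fun v w => by simp [hskew]
  obtain ⟨μ, hμ₀, hμ⟩ := exists_hasEigenvalue_ne_zero_of_not_isNilpotent hnil
  have hcompl : IsCompl (ker θ) (range θ) :=
    isCompl_ker_range_of_finrank_range_le_two hμ₀ (neg_ne_zero.mpr hμ₀) (self_ne_neg.mpr hμ₀)
      hμ (hθ.hasEigenvalue_neg hnd hμ) hrk.le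
  exact hθ.separatingLeft_ker hnd hcompl.codisjoint

/-- Let `M` be a finite-dimensional complex vector space with a
non-degenerate symmetric bilinear form `q`, and `θ : M → M` skew-symmetric with respect to
`q`, not nilpotent and of rank 2. Then the restriction of `q` to `ker θ` is non-degenerate. -/
theorem restriction_to_kernel_nondegenerate
    {M : Type*} [AddCommGroup M] [Module ℂ M] [FiniteDimensional ℂ M]
    (q : M →ₗ[ℂ] M →ₗ[ℂ] ℂ)
    (hsymm : ∀ v w : M, q v w = q w v)
    (hnd : ∀ v : M, (∀ w : M, q v w = 0) → v = 0)
    (θ : M →ₗ[ℂ] M)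
    (hskew : ∀ v₁ v₂ : M, q (θ v₁) v₂ = - q v₁ (θ v₂))
    (hnil : ¬ IsNilpotent θ)
    (hrk : Module.finrank ℂ (LinearMap.range θ) = 2) :
    ∀ v ∈ LinearMap.ker θ, (∀ w ∈ LinearMap.ker θ, q v w = 0) → v = 0 :=
  restriction_to_kernel_nondegenerate_general q hnd θ hskew hnil hrk
end
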